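/- arXiv:2007.08264 — 4 statements merged into one kernel-verified Lean document; each statement's English description precedes it below -/
import Mathlib

section
/- Let X be a set of pairs (s,u) with s ∈ ℕ and u in a commutative ring, closed under the operation ((s,u),(s',u')) ↦ (s+s', uu'). On the free noncommutative polynomial algebra H over a field K generated by variables z_{s,u} for (s,u) ∈ X, define the K-bilinear stuffle product ⋆ recursively by 1 ⋆ w = w ⋆ 1 = w and z_{s,u} w ⋆ z_{s',u'} w' = z_{s,u}(w ⋆ z_{s',u'} w') + z_{s',u'}(z_{s,u} w ⋆ w') − z_{s+s', uu'}(w ⋆ w'). Then ⋆ is commutative: w ⋆ w' = w' ⋆ w for all w, w' ∈ H. -/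
/-- The stuffle product of two words in the letters `z_{s,u}` (a letter is a pair
`(s,u) ∈ ℕ × R`), with values in the free `K`-module on words (i.e. the underlying
module of the free associative algebra `H = K⟨z_{s,u}⟩`), defined recursively by
`1 ⋆ w = w ⋆ 1 = w` and
`z_{s,u} w ⋆ z_{s',u'} w' = z_{s,u}(w ⋆ z_{s',u'} w') + z_{s',u'}(z_{s,u} w ⋆ w')
  − z_{s+s',uu'}(w ⋆ w')`. -/
noncomputable def stuffleW {K R : Type*} [Field K] [CommRing R] :
    List (ℕ × R) → List (ℕ × R) → (List (ℕ × R) →₀ K)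
  | [], w => Finsupp.single w 1
  | x :: w, [] => Finsupp.single (x :: w) 1
  | x :: w, y :: w' =>
      Finsupp.mapDomain (fun l => x :: l) (stuffleW w (y :: w')) +
      Finsupp.mapDomain (fun l => y :: l) (stuffleW (x :: w) w') -
      Finsupp.mapDomain (fun l => (x.1 + y.1, x.2 * y.2) :: l) (stuffleW w w')
  termination_by w w' => w.length + w'.length

/-- The `K`-bilinear extension of the stuffle product to `H`. -/
noncomputable def stuffle {K R : Type*} [Field K] [CommRing R]
    (f g : List (ℕ × R) →₀ K) : List (ℕ × R) →₀ K :=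
  f.sum fun w a => g.sum fun w' b => (a * b) • stuffleW w w'


lemma stuffleW_comm {K R : Type*} [Field K] [CommRing R] :
    ∀ w w' : List (ℕ × R), stuffleW (K := K) w w' = stuffleW w' w
  | [], [] => rfl
  | [], y :: w' => by rw [stuffleW, stuffleW]
  | x :: w, [] => by rw [stuffleW, stuffleW]
  | x :: w, y :: w' => by
      rw [stuffleW, stuffleW]
      rw [stuffleW_comm w (y :: w'), stuffleW_comm (x :: w) w', stuffleW_comm w w']
      rw [Nat.add_comm y.1 x.1, mul_comm y.2 x.2]
      abel
  termination_by w w' => w.length + w'.length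

/-- the stuffle product `⋆` on the free algebra
`H = K⟨z_{s,u} | (s,u) ∈ ℕ × R⟩` is commutative. -/
theorem stmt_5 {K R : Type*} [Field K] [CommRing R]
    (f g : List (ℕ × R) →₀ K) :
    stuffle f g = stuffle g f := by
  unfold stuffle
  rw [Finsupp.sum_comm]
  exact Finsupp.sum_congr fun w' _ => Finsupp.sum_congr fun w _ => by
    rw [mul_comm, stuffleW_comm]
end

section
/- With the stuffle product ⋆ defined by 1 ⋆ w = w ⋆ 1 = w and z_{s,u} w ⋆ z_{s',u'} w' = z_{s,u}(w ⋆ z_{s',u'} w') + z_{s',u'}(z_{s,u} w ⋆ w') − z_{s+s', uu'}(w ⋆ w') on the free algebra H = K⟨z_{s,u}⟩, the product ⋆ is associative: (w ⋆ w') ⋆ w'' = w ⋆ (w' ⋆ w'') for all w, w', w'' ∈ H. -/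
/-!
Extended bilinearly, the defining recursion of `⋆` holds for `z_x f ⋆ z_y g` with arbitrary
`f g ∈ H` (`stuffleₗ_cons_cons`). Associativity on words then follows by induction on the total
length: expanding `(z_x a ⋆ z_y b) ⋆ z_z c` and `z_x a ⋆ (z_y b ⋆ z_z c)` by the recursion
produces the same seven triple products of shorter words, together with one term prefixed by
the merged letter of `x, y, z`, on which the two sides agree because the letter product
`(s, u) (s', u') = (s + s', u u')` is associative.
-/

section
variable {K α : Type*} [Semiring K]

noncomputable def consₗ (x : α) : (List α →₀ K) →ₗ[K] (List α →₀ K) :=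
  Finsupp.lmapDomain K K (List.cons x)

theorem single_cons_one (x : α) (w : List α) :
    Finsupp.single (x :: w) (1 : K) = consₗ x (Finsupp.single w 1) :=
  Finsupp.mapDomain_single.symm

end

section
variable {K R : Type*} [Field K] [CommRing R]

theorem stuffleW_nil_left (w : List (ℕ × R)) :
    stuffleW (K := K) [] w = Finsupp.single w 1 := by
  rw [stuffleW]

theorem stuffleW_nil_right (w : List (ℕ × R)) :
    stuffleW (K := K) w [] = Finsupp.single w 1 := by
  cases w <;> rw [stuffleW]

theorem stuffleW_cons_cons (x y : ℕ × R) (w w' : List (ℕ × R)) :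
    stuffleW (K := K) (x :: w) (y :: w') =
      consₗ x (stuffleW w (y :: w')) + consₗ y (stuffleW (x :: w) w') -
        consₗ (x.1 + y.1, x.2 * y.2) (stuffleW w w') := by
  rw [stuffleW]
  rfl

noncomputable def stuffleₗ :
    (List (ℕ × R) →₀ K) →ₗ[K] (List (ℕ × R) →₀ K) →ₗ[K] (List (ℕ × R) →₀ K) :=
  Finsupp.lift _ K _ fun w => Finsupp.lift _ K _ fun w' => stuffleW w w'

theorem stuffle_eq_stuffleₗ (f g : List (ℕ × R) →₀ K) : stuffle f g = stuffleₗ f g := by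
  simp [stuffle, stuffleₗ, Finsupp.lift_apply, Finsupp.smul_sum, mul_smul]

theorem stuffleₗ_single_single (w w' : List (ℕ × R)) :
    stuffleₗ (Finsupp.single w 1) (Finsupp.single w' 1) = stuffleW (K := K) w w' := by
  simp [stuffleₗ]

theorem stuffleₗ_nil_left (f : List (ℕ × R) →₀ K) : stuffleₗ (Finsupp.single [] 1) f = f := by
  induction f using Finsupp.induction_linear with
  | zero => simp
  | add f g hf hg => rw [map_add, hf, hg]
  | single w a => simp [stuffleₗ, stuffleW_nil_left]

theorem stuffleₗ_nil_right (f : List (ℕ × R) →₀ K) : stuffleₗ f (Finsupp.single [] 1) = f := by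
  induction f using Finsupp.induction_linear with
  | zero => simp
  | add f g hf hg => rw [map_add, LinearMap.add_apply, hf, hg]
  | single w a => simp [stuffleₗ, stuffleW_nil_right]

theorem stuffleₗ_cons_cons (x y : ℕ × R) (f g : List (ℕ × R) →₀ K) :
    stuffleₗ (consₗ x f) (consₗ y g) =
      consₗ x (stuffleₗ f (consₗ y g)) + consₗ y (stuffleₗ (consₗ x f) g) -
        consₗ (x.1 + y.1, x.2 * y.2) (stuffleₗ f g) := by
  induction f using Finsupp.induction_linear with
  | zero => simp
  | add f₁ f₂ h₁ h₂ =>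
    simp only [map_add, LinearMap.add_apply, h₁, h₂]
    abel
  | single w a =>
    induction g using Finsupp.induction_linear with
    | zero => simp
    | add g₁ g₂ h₁ h₂ =>
      simp only [map_add, h₁, h₂]
      abel
    | single w' b =>
      simp only [← Finsupp.smul_single_one w a, ← Finsupp.smul_single_one w' b, map_smul,
        LinearMap.smul_apply, ← single_cons_one, stuffleₗ_single_single, stuffleW_cons_cons,
        smul_sub, smul_add]

theorem stuffleW_assoc : ∀ a b c : List (ℕ × R),
    stuffleₗ (stuffleW (K := K) a b) (Finsupp.single c 1) =
      stuffleₗ (Finsupp.single a 1) (stuffleW b c)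
  | [], b, c => by
    rw [stuffleW_nil_left, stuffleₗ_nil_left, stuffleₗ_single_single]
  | x :: a, [], c => by
    rw [stuffleW_nil_right, stuffleW_nil_left]
  | x :: a, y :: b, [] => by
    rw [stuffleₗ_nil_right, stuffleW_nil_right, stuffleₗ_single_single]
  | x :: a, y :: b, z :: c => by
    have ih_x := stuffleW_assoc a (y :: b) (z :: c)
    have ih_y := stuffleW_assoc (x :: a) b (z :: c)
    have ih_z := stuffleW_assoc (x :: a) (y :: b) c
    have ih_xy := stuffleW_assoc a b (z :: c)
    have ih_xz := stuffleW_assoc a (y :: b) c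
    have ih_yz := stuffleW_assoc (x :: a) b c
    have ih_xyz := stuffleW_assoc a b c
    simp only [single_cons_one] at ih_x ih_y ih_z ih_xy ih_xz ih_yz ih_xyz ⊢
    simp only [stuffleW_cons_cons, map_add, map_sub, LinearMap.add_apply, LinearMap.sub_apply,
      stuffleₗ_cons_cons, ih_x, ← ih_y, ← ih_z, ← ih_xy, ← ih_xz, ← ih_yz, ← ih_xyz]
    rw [add_assoc x.1, mul_assoc x.2]
    abel
  termination_by a b c => a.length + b.length + c.length
  decreasing_by all_goals (simp only [List.length_cons]; omega)

theorem stuffleₗ_assoc (f g h : List (ℕ × R) →₀ K) :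
    stuffleₗ (stuffleₗ f g) h = stuffleₗ f (stuffleₗ g h) := by
  -- the right-hand side as a trilinear map is `f ↦ g ↦ (f ⋆ ·) ∘ₗ (g ⋆ ·)`
  suffices stuffleₗ.compr₂ stuffleₗ =
      (LinearMap.llcomp K _ _ _ ∘ₗ stuffleₗ).compl₂ (stuffleₗ (K := K) (R := R)) from
    congr($this f g h)
  ext a b c
  simp [stuffleₗ_single_single, stuffleW_assoc]

end

/-- the stuffle product `⋆` on the free algebra
`H = K⟨z_{s,u} | (s,u) ∈ ℕ × R⟩` is associative. -/
theorem stmt_6 {K R : Type*} [Field K] [CommRing R]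
    (f g h : List (ℕ × R) →₀ K) :
    stuffle (stuffle f g) h = stuffle f (stuffle g h) := by
  simpa only [stuffle_eq_stuffleₗ] using stuffleₗ_assoc f g h
end

section
/- Let s ≥ 1 and m ≥ 1 with m ≡ ℓ (mod s), 0 < ℓ ≤ s. Write [t^m]_s = Σ_i a_i τ^i ∈ Mat_s(A[τ]) with top degree n = ⌈m/s⌉. Then the leading coefficient matrix a_n = (c_{ij}) satisfies c_{ij} = 1 if i = j + s − ℓ and c_{ij} = 0 if i < j + s − ℓ (i.e. it is lower-triangular in the shifted sense with 1's on the (s−ℓ)-shifted diagonal and zeros above). -/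
/-!
Write `[t]_s = D + E τ` with `D = θ I + N`. By induction on `m`, the `τ^k`-coefficient of
`[t]_s^m` vanishes strictly above the diagonal shifted down by `k s - m` and is `1` on it:
left multiplication by `D` moves this band up one row, the row `s - 1` that falls off is
refilled by `E`, which copies row `0` of the `τ^(k-1)`-coefficient (whose band sits `s` rows
higher), and the Frobenius twist fixes `0` and `1`. For `k = ⌈m/s⌉` the shift is `s - ℓ`.
-/

open Polynomial

/-- Multiplication in the twisted matrix polynomial ring `Mat_s(A[τ])`
(`A = F_q[θ]`), modelled as `ℕ →₀ Mat_s(A)` with `τ M = M^{(1)} τ`, where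
`M^{(1)}` is the entrywise `q`-power Frobenius twist. -/
noncomputable def tmulM (q s : ℕ) {Fq : Type*} [Field Fq]
    (f g : ℕ →₀ Matrix (Fin s) (Fin s) (Polynomial Fq)) :
    ℕ →₀ Matrix (Fin s) (Fin s) (Polynomial Fq) :=
  f.sum fun i a => g.sum fun j b =>
    Finsupp.single (i + j) (a * b.map fun x => x ^ q ^ i)

/-- `m`-fold composition power in the twisted matrix polynomial ring. -/
noncomputable def tpowM (q s : ℕ) {Fq : Type*} [Field Fq]
    (f : ℕ →₀ Matrix (Fin s) (Fin s) (Polynomial Fq)) :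
    ℕ → ℕ →₀ Matrix (Fin s) (Fin s) (Polynomial Fq)
  | 0 => Finsupp.single 0 1
  | n + 1 => tmulM q s f (tpowM q s f n)

/-- The defining element `[t]_s = (θ I_s + N_s) + E_s τ` of the `s`-th tensor power
`C^{⊗s}` of the Carlitz module: `N_s` has `1`s on the superdiagonal and `E_s` has a
single `1` in the lower-left corner. -/
noncomputable def carlitzT (s : ℕ) (Fq : Type*) [Field Fq] :
    ℕ →₀ Matrix (Fin s) (Fin s) (Polynomial Fq) :=
  Finsupp.single 0 ((X : Polynomial Fq) • (1 : Matrix (Fin s) (Fin s) (Polynomial Fq)) +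
      Matrix.of fun i j : Fin s => if (i : ℕ) + 1 = (j : ℕ) then 1 else 0) +
  Finsupp.single 1
    (Matrix.of fun i j : Fin s => if (i : ℕ) = s - 1 ∧ (j : ℕ) = 0 then 1 else 0)

lemma Finsupp.sum_single_add_apply {β M : Type*} [Zero β] [AddCommMonoid M] (g : ℕ →₀ β)
    {F : ℕ → β → M} (hF : ∀ j, F j 0 = 0) (c k : ℕ) :
    (g.sum fun j b => Finsupp.single (c + j) (F j b)) (c + k) = F k (g k) := by
  rw [Finsupp.sum_apply, Finsupp.sum_eq_single k] <;> simp +contextual [hF]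

lemma Finsupp.sum_single_add_apply_of_lt {β M : Type*} [Zero β] [AddCommMonoid M]
    (g : ℕ →₀ β) (F : ℕ → β → M) {c k : ℕ} (hk : k < c) :
    (g.sum fun j b => Finsupp.single (c + j) (F j b)) k = 0 := by
  rw [Finsupp.sum_apply]
  exact Finset.sum_eq_zero fun j _ => Finsupp.single_eq_of_ne (by omega)

lemma Nat.add_sub_one_div_mul_eq_of_mod_eq {m s ℓ : ℕ} (hℓ0 : 0 < ℓ) (hℓs : ℓ ≤ s)
    (h : m % s = ℓ % s) : (m + s - 1) / s * s = m + s - ℓ := by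
  obtain ⟨c, hc⟩ : s ∣ m + s - ℓ :=
    Nat.dvd_of_mod_eq_zero (Nat.sub_mod_eq_zero_of_mod_eq (by rwa [Nat.add_mod_right]))
  have hsplit : m + s - 1 = s * c + (ℓ - 1) := by omega
  rw [hsplit, Nat.mul_add_div (by omega), Nat.div_eq_of_lt (by omega), add_zero, hc, mul_comm]

namespace Matrix

variable {n : ℕ} {R S : Type*} [Zero R] [One R] [Zero S] [One S]

def IsShiftedUnitriangular (M : Matrix (Fin n) (Fin n) R) (d : ℤ) : Prop :=
  ∀ i j : Fin n, ((i : ℤ) < j + d → M i j = 0) ∧ ((i : ℤ) = j + d → M i j = 1)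

lemma isShiftedUnitriangular_one :
    (1 : Matrix (Fin n) (Fin n) R).IsShiftedUnitriangular 0 := by
  intro i j
  constructor
  · intro h
    exact one_apply_ne (by omega)
  · intro h
    rw [show i = j by omega, one_apply_eq]

lemma isShiftedUnitriangular_zero {d : ℤ} (hd : n ≤ d ∨ d ≤ -n) :
    (0 : Matrix (Fin n) (Fin n) R).IsShiftedUnitriangular d := fun i j =>
  ⟨fun _ => rfl, fun h => by have := i.isLt; have := j.isLt; omega⟩

lemma IsShiftedUnitriangular.map {M : Matrix (Fin n) (Fin n) R} {d : ℤ}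
    (hM : M.IsShiftedUnitriangular d) {f : R → S} (h0 : f 0 = 0) (h1 : f 1 = 1) :
    (M.map f).IsShiftedUnitriangular d := fun i j =>
  ⟨fun h => by rw [map_apply, (hM i j).1 h, h0], fun h => by rw [map_apply, (hM i j).2 h, h1]⟩

end Matrix

namespace CarlitzTensor

variable {s : ℕ} {Fq : Type*} [Field Fq]

variable (s Fq) in
noncomputable def constCoeff : Matrix (Fin s) (Fin s) Fq[X] :=
  (X : Fq[X]) • (1 : Matrix (Fin s) (Fin s) Fq[X]) +
    Matrix.of fun i j : Fin s => if (i : ℕ) + 1 = (j : ℕ) then 1 else 0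

variable (s Fq) in
noncomputable def tauCoeff : Matrix (Fin s) (Fin s) Fq[X] :=
  Matrix.of fun i j : Fin s => if (i : ℕ) = s - 1 ∧ (j : ℕ) = 0 then 1 else 0

lemma constCoeff_mul_apply (M : Matrix (Fin s) (Fin s) Fq[X]) (i j : Fin s) :
    (constCoeff s Fq * M) i j
      = X * M i j + if h : (i : ℕ) + 1 < s then M ⟨i + 1, h⟩ j else 0 := by
  rw [constCoeff, Matrix.add_mul, Matrix.add_apply, Matrix.smul_mul, Matrix.one_mul,
    Matrix.smul_apply, smul_eq_mul, Matrix.mul_apply]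
  congr 1
  split_ifs with h
  · rw [Finset.sum_eq_single ⟨i + 1, h⟩] <;> aesop
  · refine Finset.sum_eq_zero fun l _ => ?_
    have : (i : ℕ) + 1 ≠ l := by omega
    simp [this]

lemma tauCoeff_mul_apply (M : Matrix (Fin s) (Fin s) Fq[X]) (i j : Fin s) :
    (tauCoeff s Fq * M) i j = if (i : ℕ) = s - 1 then M ⟨0, i.pos⟩ j else 0 := by
  rw [tauCoeff, Matrix.mul_apply]
  split_ifs with h
  · rw [Finset.sum_eq_single ⟨0, i.pos⟩] <;> simp +contextual [h, Fin.ext_iff]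
  · simp [h]

lemma tmulM_carlitzT (q : ℕ) (g : ℕ →₀ Matrix (Fin s) (Fin s) Fq[X]) :
    tmulM q s (carlitzT s Fq) g =
      (g.sum fun j b => Finsupp.single (0 + j) (constCoeff s Fq * b.map (· ^ q ^ 0))) +
      (g.sum fun j b => Finsupp.single (1 + j) (tauCoeff s Fq * b.map (· ^ q ^ 1))) := by
  rw [tmulM, carlitzT, Finsupp.sum_add_index', Finsupp.sum_single_index,
    Finsupp.sum_single_index]
  · rfl
  all_goals
    simp only [zero_mul, add_mul, Finsupp.single_zero, Finsupp.single_add,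
      Finsupp.sum, Finset.sum_const_zero, Finset.sum_add_distrib, implies_true]

lemma tmulM_carlitzT_apply_zero (q : ℕ) (g : ℕ →₀ Matrix (Fin s) (Fin s) Fq[X]) :
    tmulM q s (carlitzT s Fq) g 0 = constCoeff s Fq * g 0 := by
  have h := Finsupp.sum_single_add_apply g
    (F := fun _ b => constCoeff s Fq * b.map (· ^ q ^ 0)) (fun _ => by ext; simp) 0 0
  rw [tmulM_carlitzT, Finsupp.add_apply, Finsupp.sum_single_add_apply_of_lt _ _ one_pos,
    add_zero]
  refine h.trans ?_
  simp

lemma tmulM_carlitzT_apply_succ {q : ℕ} (hq : q ≠ 0)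
    (g : ℕ →₀ Matrix (Fin s) (Fin s) Fq[X]) (k : ℕ) :
    tmulM q s (carlitzT s Fq) g (k + 1) =
      constCoeff s Fq * g (k + 1) + tauCoeff s Fq * (g k).map (· ^ q) := by
  rw [tmulM_carlitzT, Finsupp.add_apply, add_comm k 1, ← zero_add (1 + k),
    Finsupp.sum_single_add_apply _ (by simp), zero_add,
    Finsupp.sum_single_add_apply _ (fun _ => by ext; simp [zero_pow hq])]
  simp

lemma isShiftedUnitriangular_constCoeff_mul_add_tauCoeff_mul
    {M N : Matrix (Fin s) (Fin s) Fq[X]} {d : ℤ}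
    (hM : M.IsShiftedUnitriangular d) (hN : N.IsShiftedUnitriangular (d - s)) :
    (constCoeff s Fq * M + tauCoeff s Fq * N).IsShiftedUnitriangular (d - 1) := by
  intro i j
  have hi := i.isLt
  rw [Matrix.add_apply, constCoeff_mul_apply, tauCoeff_mul_apply]
  constructor
  · intro h
    rw [(hM i j).1 (by omega), mul_zero, zero_add]
    split_ifs with h₁ h₂ h₂
    · omega
    · rw [(hM ⟨i + 1, h₁⟩ j).1 (by simp; omega), add_zero]
    · rw [(hN ⟨0, i.pos⟩ j).1 (by simp; omega), zero_add]
    · rw [add_zero]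
  · intro h
    rw [(hM i j).1 (by omega), mul_zero, zero_add]
    split_ifs with h₁ h₂ h₂
    · omega
    · rw [(hM ⟨i + 1, h₁⟩ j).2 (by simp; omega), add_zero]
    · rw [(hN ⟨0, i.pos⟩ j).2 (by simp; omega), zero_add]
    · omega

theorem tpowM_carlitzT_isShiftedUnitriangular {q : ℕ} (hq : q ≠ 0) (m k : ℕ) :
    (tpowM q s (carlitzT s Fq) m k).IsShiftedUnitriangular (k * s - m) := by
  induction m generalizing k with
  | zero =>
    cases k with
    | zero => simpa [tpowM] using Matrix.isShiftedUnitriangular_one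
    | succ k =>
      simpa [tpowM] using Matrix.isShiftedUnitriangular_zero (Or.inl (by nlinarith))
  | succ m ih =>
    cases k with
    | zero =>
      have h := isShiftedUnitriangular_constCoeff_mul_add_tauCoeff_mul (ih 0)
        (Matrix.isShiftedUnitriangular_zero (Or.inr (by simp)))
      rw [mul_zero, add_zero] at h
      rw [tpowM, tmulM_carlitzT_apply_zero]
      convert h using 1
      push_cast
      ring
    | succ k =>
      have hN : ((tpowM q s (carlitzT s Fq) m k).map (· ^ q)).IsShiftedUnitriangular
          ((k + 1 : ℕ) * s - m - s) := by
        convert (ih k).map (f := (· ^ q)) (zero_pow hq) (one_pow q) using 1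
        push_cast
        ring
      rw [tpowM, tmulM_carlitzT_apply_succ hq]
      convert isShiftedUnitriangular_constCoeff_mul_add_tauCoeff_mul (ih (k + 1)) hN using 1
      push_cast
      ring

end CarlitzTensor

theorem stmt_10_general (q s : ℕ)
    (Fq : Type*) [Field Fq] [Fintype Fq] (hq : Fintype.card Fq = q)
    (m ℓ : ℕ) (hℓ0 : 0 < ℓ) (hℓs : ℓ ≤ s) (hmod : m % s = ℓ % s) :
    ∀ i j : Fin s,
      ((i : ℕ) = (j : ℕ) + s - ℓ →
        (tpowM q s (carlitzT s Fq) m) ((m + s - 1) / s) i j = 1) ∧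
      ((i : ℕ) < (j : ℕ) + s - ℓ →
        (tpowM q s (carlitzT s Fq) m) ((m + s - 1) / s) i j = 0) := by
  intro i j
  have hq0 : q ≠ 0 := hq ▸ Fintype.card_ne_zero
  have hdeg : (((m + s - 1) / s : ℕ) : ℤ) * s - m = s - ℓ := by
    rw [← Nat.cast_mul, Nat.add_sub_one_div_mul_eq_of_mod_eq hℓ0 hℓs hmod,
      Nat.cast_sub (by omega)]
    push_cast
    ring
  have h := CarlitzTensor.tpowM_carlitzT_isShiftedUnitriangular (Fq := Fq) hq0 m
    ((m + s - 1) / s) i j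
  rw [hdeg] at h
  exact ⟨fun hij => h.2 (by omega), fun hij => h.1 (by omega)⟩

/-- Papanikolas's leading-coefficient computation. For `m ≡ ℓ (mod s)`
with `0 < ℓ ≤ s`, the leading coefficient matrix `a_n` of `[t^m]_s` (where
`n = ⌈m/s⌉ = (m+s-1)/s`) has `(i,j)`-entry `1` if `i = j + s − ℓ` and `0` if
`i < j + s − ℓ`. -/
theorem stmt_10 (q s : ℕ) (hs : 1 ≤ s)
    (Fq : Type*) [Field Fq] [Fintype Fq] (hq : Fintype.card Fq = q)
    (m ℓ : ℕ) (hm : 1 ≤ m) (hℓ0 : 0 < ℓ) (hℓs : ℓ ≤ s) (hmod : m % s = ℓ % s) :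
    ∀ i j : Fin s,
      ((i : ℕ) = (j : ℕ) + s - ℓ →
        (tpowM q s (carlitzT s Fq) m) ((m + s - 1) / s) i j = 1) ∧
      ((i : ℕ) < (j : ℕ) + s - ℓ →
        (tpowM q s (carlitzT s Fq) m) ((m + s - 1) / s) i j = 0) :=
  stmt_10_general q s Fq hq m ℓ hℓ0 hℓs hmod
end

section
/- Suppose 0 < c < 1 and a sequence (a_i)_{i≥0} of nonnegative reals satisfies a_0 = c and a_{i+1} ≤ max{a_i^{Q}, a_i/Q} for a fixed real Q > 1. Then a_i → 0 as i → ∞. -/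
/-- abstract analytic core: if `0 < c < 1`, `Q > 1`, and a sequence of
nonnegative reals satisfies `a 0 = c` and `a_{i+1} ≤ max{a_i^Q, a_i/Q}`, then
`a_i → 0`. -/
theorem stmt_14 (Q : ℝ) (hQ : 1 < Q) (c : ℝ) (hc0 : 0 < c) (hc1 : c < 1)
    (a : ℕ → ℝ) (ha0 : a 0 = c) (hpos : ∀ i, 0 ≤ a i)
    (hrec : ∀ i, a (i + 1) ≤ max ((a i) ^ Q) (a i / Q)) :
    Filter.Tendsto a Filter.atTop (nhds 0) := by
  have hQ0 : (0:ℝ) < Q := lt_trans one_pos hQ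
  -- step lemma: if a i ≤ c then a (i+1) ≤ a i
  have hstep : ∀ i, a i ≤ c → a (i + 1) ≤ a i := by
    intro i hic
    refine (hrec i).trans (max_le ?_ ?_)
    · rcases eq_or_lt_of_le (hpos i) with h0 | h0
      · rw [← h0, Real.zero_rpow (ne_of_gt hQ0)]
      · calc a i ^ Q ≤ a i ^ (1:ℝ) :=
              Real.rpow_le_rpow_of_exponent_ge h0 (hic.trans hc1.le) hQ.le
          _ = a i := Real.rpow_one _
    · calc a i / Q ≤ a i / 1 := by
            apply div_le_div_of_nonneg_left (hpos i) one_pos hQ.le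
          _ = a i := div_one _
  have hle : ∀ i, a i ≤ c := by
    intro i
    induction i with
    | zero => exact le_of_eq ha0
    | succ n ih => exact (hstep n ih).trans ih
  have hanti : Antitone a := antitone_nat_of_succ_le (fun n => hstep n (hle n))
  have hbdd : BddBelow (Set.range a) := ⟨0, by rintro x ⟨i, rfl⟩; exact hpos i⟩
  set L := ⨅ i, a i with hLdef
  have hL : Filter.Tendsto a Filter.atTop (nhds L) :=
    tendsto_atTop_ciInf hanti hbdd
  have hL0 : 0 ≤ L := le_ciInf (fun i => hpos i)
  rcases eq_or_lt_of_le hL0 with h0 | hLpos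
  · rwa [← h0] at hL
  · exfalso
    have hLc : L ≤ c := by
      have := ciInf_le hbdd 0
      rwa [ha0] at this
    have hL1 : L < 1 := lt_of_le_of_lt hLc hc1
    -- pass to the limit in the recursion
    have htail : Filter.Tendsto (fun i => a (i + 1)) Filter.atTop (nhds L) :=
      hL.comp (Filter.tendsto_add_atTop_nat 1)
    have hrpow : Filter.Tendsto (fun i => a i ^ Q) Filter.atTop (nhds (L ^ Q)) :=
      ((Real.continuousAt_rpow_const L Q (Or.inl (ne_of_gt hLpos))).tendsto).comp hL
    have hdiv : Filter.Tendsto (fun i => a i / Q) Filter.atTop (nhds (L / Q)) :=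
      hL.div_const Q
    have hmax : Filter.Tendsto (fun i => max (a i ^ Q) (a i / Q)) Filter.atTop
        (nhds (max (L ^ Q) (L / Q))) := hrpow.max hdiv
    have hLle : L ≤ max (L ^ Q) (L / Q) :=
      le_of_tendsto_of_tendsto' htail hmax hrec
    have h1 : L ^ Q < L := by
      calc L ^ Q < L ^ (1:ℝ) := Real.rpow_lt_rpow_of_exponent_gt hLpos hL1 hQ
        _ = L := Real.rpow_one _
    have h2 : L / Q < L := div_lt_self hLpos hQ
    exact absurd hLle (not_le.mpr (max_lt h1 h2))
end
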